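/- arXiv:1308.6044 — 2 statements merged into one kernel-verified Lean document; each statement's English description precedes it below -/
import Mathlib

section
/- Let (R, m) be a commutative Noetherian local ring of Krull dimension d ≥ 1 with m ∈ Ass_R(R) (equivalently, Γ_m(R) ≠ 0). Then there exists a system of parameters a_1, ..., a_d of R such that m ∈ Ass_R(R/(a_1, ..., a_i)) for every i with 1 ≤ i ≤ d. -/
open IsLocalRing

/-!
A socle element `x ≠ 0` of `R` (one with `𝔪 x = 0`) survives modulo `𝔪 ^ n` for some `n` by
Krull's intersection theorem. Raising any system of parameters to the `n`-th power gives a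
system of parameters all of whose partial ideals lie in `𝔪 ^ n`; modulo each of them `x` stays
nonzero and is still killed by `𝔪`, so `𝔪` is its annihilator.
-/

section AssociatedPrimes

variable {R M : Type*} [CommRing R] [AddCommGroup M] [Module R M]

lemma isAssociatedPrime_of_isMaximal {m : Ideal R} [hm : m.IsMaximal] {x : M} (hx : x ≠ 0)
    (hmx : ∀ r ∈ m, r • x = 0) : IsAssociatedPrime m M := by
  have hne : (⊥ : Submodule R M).colon {x} ≠ ⊤ := fun h =>
    hx (by simpa using Submodule.mem_colon_singleton.mp ((Ideal.eq_top_iff_one _).mp h))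
  have hcolon : m = (⊥ : Submodule R M).colon {x} :=
    hm.eq_of_le hne fun r hr => Submodule.mem_colon_singleton.mpr (hmx r hr)
  exact ⟨hm.isPrime, x, by rw [← hcolon, hm.isPrime.radical]⟩

lemma mem_associatedPrimes_quotient_of_smul_mem {m : Ideal R} [m.IsMaximal] {N : Submodule R M}
    {x : M} (hx : x ∉ N) (hmx : ∀ r ∈ m, r • x ∈ N) : m ∈ associatedPrimes R (M ⧸ N) :=
  isAssociatedPrime_of_isMaximal (x := N.mkQ x) (by simpa using hx) fun r hr => by
    simpa [← Submodule.Quotient.mk_smul] using hmx r hr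

lemma IsAssociatedPrime.exists_ne_zero_forall_smul_eq_zero [IsNoetherianRing R] {p : Ideal R}
    (h : IsAssociatedPrime p M) : ∃ x : M, x ≠ 0 ∧ ∀ r ∈ p, r • x = 0 := by
  obtain ⟨hp, x, rfl⟩ := isAssociatedPrime_iff.mp h
  refine ⟨x, fun hx => hp.ne_top ?_, fun r hr => by simpa using hr⟩
  simp [hx]

end AssociatedPrimes

lemma Ideal.radical_span_range_pow {R ι : Type*} [CommRing R] (a : ι → R) {n : ℕ} (hn : n ≠ 0) :
    (Ideal.span (Set.range fun i => a i ^ n)).radical = (Ideal.span (Set.range a)).radical := by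
  refine le_antisymm (Ideal.radical_mono (Ideal.span_le.mpr ?_))
    (Ideal.radical_le_radical_iff.mpr (Ideal.span_le.mpr ?_))
  · rintro _ ⟨i, rfl⟩
    exact Ideal.pow_mem_of_mem _ (Ideal.subset_span (Set.mem_range_self i)) n (Nat.pos_of_ne_zero hn)
  · rintro _ ⟨i, rfl⟩
    exact Ideal.mem_radical_iff.mpr ⟨n, Ideal.subset_span (Set.mem_range_self i)⟩

namespace IsLocalRing

variable {R : Type*} [CommRing R] [IsLocalRing R]

lemma radical_eq_maximalIdeal_of_mem_minimalPrimes {I : Ideal R}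
    (h : maximalIdeal R ∈ I.minimalPrimes) : I.radical = maximalIdeal R := by
  rw [← Ideal.sInf_minimalPrimes]
  exact le_antisymm (sInf_le h)
    (le_sInf fun p hp => h.2 hp.1 (le_maximalIdeal hp.1.1.ne_top))

variable [IsNoetherianRing R]

lemma exists_notMem_maximalIdeal_pow {x : R} (hx : x ≠ 0) :
    ∃ n, n ≠ 0 ∧ x ∉ maximalIdeal R ^ n := by
  by_contra! h
  refine hx ((Submodule.mem_bot R).mp ?_)
  rw [← Ideal.iInf_pow_eq_bot_of_isLocalRing _ (maximalIdeal.isMaximal R).ne_top]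
  refine Ideal.mem_iInf.mpr fun n => ?_
  rcases eq_or_ne n 0 with rfl | hn
  · simp
  · exact h n hn

lemma exists_radical_span_range_eq_maximalIdeal (d : ℕ) (hdim : ringKrullDim R = d) :
    ∃ a : Fin d → R, (∀ i, a i ∈ maximalIdeal R) ∧
      (Ideal.span (Set.range a)).radical = maximalIdeal R := by
  obtain ⟨s, hs, hcard⟩ := Ideal.exists_finset_card_eq_height_of_isNoetherianRing (maximalIdeal R)
  have hsd : s.card = d := by
    have := maximalIdeal_height_eq_ringKrullDim (R := R)
    rw [← hcard, hdim] at this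
    exact_mod_cast this
  let e := s.equivFinOfCardEq hsd
  have hrange : Set.range (fun i => (e.symm i : R)) = s := by
    ext y
    exact ⟨by rintro ⟨i, rfl⟩; exact (e.symm i).2, fun hy => ⟨e ⟨y, hy⟩, by simp⟩⟩
  refine ⟨fun i => e.symm i, fun i => hs.1.2 (Ideal.subset_span (e.symm i).2), ?_⟩
  rw [hrange]
  exact radical_eq_maximalIdeal_of_mem_minimalPrimes hs

end IsLocalRing

theorem exists_sop_maximalIdeal_mem_associatedPrimes_general (R : Type*) [CommRing R] [IsNoetherianRing R] [IsLocalRing R]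
    (d : ℕ) (hdim : ringKrullDim R = d)
    (hm : maximalIdeal R ∈ associatedPrimes R R) :
    ∃ a : Fin d → R, (∀ i, a i ∈ maximalIdeal R) ∧
      (Ideal.span (Set.range a)).radical = maximalIdeal R ∧
      ∀ i : ℕ, 1 ≤ i → i ≤ d →
        maximalIdeal R ∈ associatedPrimes R
          (R ⧸ Ideal.span (a '' {j : Fin d | (j : ℕ) < i})) := by
  obtain ⟨x, hx0, hmx⟩ := IsAssociatedPrime.exists_ne_zero_forall_smul_eq_zero hm
  obtain ⟨n, hn, hxn⟩ := exists_notMem_maximalIdeal_pow hx0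
  obtain ⟨b, hbm, hbrad⟩ := exists_radical_span_range_eq_maximalIdeal d hdim
  refine ⟨fun i => b i ^ n, fun i => Ideal.pow_mem_of_mem _ (hbm i) n (Nat.pos_of_ne_zero hn),
    by rw [Ideal.radical_span_range_pow b hn, hbrad], fun i _ _ => ?_⟩
  have hle : Ideal.span ((fun j => b j ^ n) '' {j : Fin d | (j : ℕ) < i}) ≤ maximalIdeal R ^ n :=
    Ideal.span_le.mpr (by rintro _ ⟨j, -, rfl⟩; exact Ideal.pow_mem_pow (hbm j) n)
  exact mem_associatedPrimes_quotient_of_smul_mem (fun hx => hxn (hle hx))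
    fun r hr => by rw [hmx r hr]; exact zero_mem _

theorem exists_sop_maximalIdeal_mem_associatedPrimes (R : Type*) [CommRing R] [IsNoetherianRing R] [IsLocalRing R]
    (d : ℕ) (hd : 1 ≤ d) (hdim : ringKrullDim R = d)
    (hm : maximalIdeal R ∈ associatedPrimes R R) :
    ∃ a : Fin d → R, (∀ i, a i ∈ maximalIdeal R) ∧
      (Ideal.span (Set.range a)).radical = maximalIdeal R ∧
      ∀ i : ℕ, 1 ≤ i → i ≤ d →
        maximalIdeal R ∈ associatedPrimes R
          (R ⧸ Ideal.span (a '' {j : Fin d | (j : ℕ) < i})) :=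
  exists_sop_maximalIdeal_mem_associatedPrimes_general R d hdim hm
end

section
/- Let (R, m) be a commutative Noetherian local ring of Krull dimension 1. Suppose that for every element b ∈ m with √(b) = m and every integer s ≥ 1, the R-module Hom_R(R/(b), R/(b^s)) is isomorphic to R/(b). Then R is a Cohen-Macaulay ring, i.e., m ∉ Ass_R(R). -/
/-!
Pick a parameter `b` and, by Noetherianity, an `n ≠ 0` with `(0 : b^n) = (0 : b^{2n})`; put
`c = b^n`. A homomorphism `R/(c) → R/(c²)` is multiplication by an element of the colon ideal
`(c² : c) = (c) + (0 : c)`, so the hypothesis makes this ideal principal modulo `(c²)`. By Nakayama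
it is then `(c)`, whence `(0 : c) ⊆ (c) ∩ (0 : c) = 0`. So `b` is a nonzerodivisor in `m`, and
`m` cannot be an associated prime.
-/

open IsLocalRing

section

variable {R : Type*} [CommRing R]

theorem IsLocalRing.radical_eq_maximalIdeal_of_mem_minimalPrimes_s14 [IsLocalRing R] {I : Ideal R}
    (hI : maximalIdeal R ∈ I.minimalPrimes) : I.radical = maximalIdeal R := by
  refine le_antisymm ((Ideal.IsPrime.radical_le_iff inferInstance).mpr hI.1.2) ?_
  rw [Ideal.radical_eq_sInf]
  exact le_sInf fun p ⟨hIp, hp⟩ ↦ hI.2 ⟨hp, hIp⟩ (le_maximalIdeal hp.ne_top)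

theorem IsLocalRing.exists_radical_span_singleton_eq_maximalIdeal [IsNoetherianRing R]
    [IsLocalRing R] (hdim : ringKrullDim R = 1) :
    ∃ b : R, (Ideal.span {b}).radical = maximalIdeal R := by
  obtain ⟨s, hmin, hcard⟩ := (maximalIdeal R).exists_finset_card_eq_height_of_isNoetherianRing
  have hs : ((s.card : ℕ∞) : WithBot ℕ∞) = 1 := by
    rw [hcard, maximalIdeal_height_eq_ringKrullDim, hdim]
  obtain ⟨b, rfl⟩ := Finset.card_eq_one.mp (by exact_mod_cast hs)
  exact ⟨b, radical_eq_maximalIdeal_of_mem_minimalPrimes_s14 (by simpa using hmin)⟩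

theorem IsLocalRing.krullDimLE_zero_of_isNilpotent_of_radical_span_singleton_eq [IsLocalRing R]
    {b : R} (hb : IsNilpotent b) (hrad : (Ideal.span {b}).radical = maximalIdeal R) :
    Ring.KrullDimLE 0 R := by
  have hnil : nilradical R = maximalIdeal R := by
    refine hrad ▸ le_antisymm (Ideal.radical_mono bot_le) ?_
    exact Ideal.radical_le_radical_iff.mpr
      ((Ideal.span_singleton_le_iff_mem _).mpr (mem_nilradical.mpr hb))
  have : (nilradical R).IsMaximal := hnil ▸ inferInstance
  exact Ring.KrullDimLE.of_isMaximal_nilradical R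

theorem exists_pow_ne_zero_forall_mul_pow_mul_pow_eq_zero [IsNoetherianRing R] (b : R) :
    ∃ n ≠ 0, ∀ w : R, w * b ^ n * b ^ n = 0 → w * b ^ n = 0 := by
  obtain ⟨n, hdisj, hn⟩ :=
    ((Module.End.eventually_disjoint_ker_pow_range_pow (LinearMap.mulLeft R b)).and
      (Filter.eventually_ne_atTop 0)).exists
  refine ⟨n, hn, fun w hw ↦ ?_⟩
  rw [LinearMap.pow_mulLeft] at hdisj
  refine Submodule.disjoint_def.mp hdisj _ ?_ ⟨w, mul_comm _ _⟩
  simpa [LinearMap.mem_ker, mul_comm] using hw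

theorem Ideal.Quotient.mk_mul_eq_smul {I : Ideal R} (r x : R) :
    Ideal.Quotient.mk I (r * x) = r • Ideal.Quotient.mk I x :=
  Submodule.Quotient.mk_smul I r x

theorem LinearEquiv.exists_span_singleton_eq_top_of_quotient {M : Type*} [AddCommGroup M]
    [Module R M] {I : Ideal R} (e : M ≃ₗ[R] R ⧸ I) : ∃ ψ : M, Submodule.span R {ψ} = ⊤ := by
  refine ⟨e.symm (Ideal.Quotient.mk I 1), Submodule.eq_top_iff'.mpr fun φ ↦ ?_⟩
  obtain ⟨t, ht⟩ := Ideal.Quotient.mk_surjective (e φ)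
  refine Submodule.mem_span_singleton.mpr ⟨t, e.injective ?_⟩
  rw [map_smul, e.apply_symm_apply, ← ht, ← Ideal.Quotient.mk_mul_eq_smul, mul_one]

theorem Ideal.exists_colon_eq_span_singleton_sup_of_span_singleton_eq_top {I J : Ideal R}
    {ψ : (R ⧸ I) →ₗ[R] (R ⧸ J)} (hψ : Submodule.span R {ψ} = ⊤) :
    ∃ y : R, J.colon (I : Set R) = Ideal.span {y} ⊔ J := by
  obtain ⟨y, hy⟩ := Ideal.Quotient.mk_surjective (ψ (Ideal.Quotient.mk I 1))
  have hψ_apply (r : R) : ψ (Ideal.Quotient.mk I r) = Ideal.Quotient.mk J (r * y) := by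
    rw [← mul_one r, Ideal.Quotient.mk_mul_eq_smul, map_smul, ← hy, mul_one,
      Ideal.Quotient.mk_mul_eq_smul]
  refine ⟨y, le_antisymm (fun z hz ↦ ?_) (sup_le ?_ fun z hz ↦ ?_)⟩
  · have hzI : I ≤ Submodule.comap (LinearMap.mulLeft R z) J := fun r hr ↦ by
      simpa [mul_comm] using Submodule.mem_colon.mp hz r hr
    obtain ⟨t, ht⟩ := Submodule.mem_span_singleton.mp
      (hψ ▸ Submodule.mem_top : Submodule.mapQ I J _ hzI ∈ Submodule.span R {ψ})
    have htz : Ideal.Quotient.mk J (t * y) = Ideal.Quotient.mk J z := by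
      have hφ : Submodule.mapQ I J _ hzI (Ideal.Quotient.mk I 1) = Ideal.Quotient.mk J z :=
        congrArg (Ideal.Quotient.mk J) (mul_one z)
      rw [← hφ, ← ht, LinearMap.smul_apply, hψ_apply, one_mul, Ideal.Quotient.mk_mul_eq_smul]
    refine Submodule.mem_sup.mpr ⟨t * y, Ideal.mem_span_singleton'.mpr ⟨t, rfl⟩, z - t * y,
      (Ideal.Quotient.mk_eq_mk_iff_sub_mem _ _).mp htz.symm, add_sub_cancel _ _⟩
  · rw [Ideal.span_singleton_le_iff_mem, Submodule.mem_colon]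
    intro r hr
    rw [smul_eq_mul, mul_comm, ← Ideal.Quotient.eq_zero_iff_mem, ← hψ_apply,
      Ideal.Quotient.eq_zero_iff_mem.mpr hr, map_zero]
  · exact Submodule.mem_colon.mpr fun r _ ↦ J.mul_mem_right r hz

theorem IsLocalRing.mem_nonZeroDivisors_of_colon_eq_span_singleton_sup [IsLocalRing R] {c y : R}
    (hcm : c ∈ maximalIdeal R) (hc0 : c ≠ 0) (hc : ∀ w : R, w * c * c = 0 → w * c = 0)
    (hy : (Ideal.span {c ^ 2}).colon (Ideal.span {c} : Set R) =
      Ideal.span {y} ⊔ Ideal.span {c ^ 2}) :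
    c ∈ nonZeroDivisors R := by
  have hmem (z : R) : z * c ∈ Ideal.span {c ^ 2} ↔ ∃ t u : R, t * y + u * c ^ 2 = z := by
    rw [← smul_eq_mul, ← Submodule.mem_colon_singleton, ← Submodule.colon_span, hy,
      Submodule.mem_sup]
    simp only [Ideal.mem_span_singleton', exists_exists_eq_and]
  obtain ⟨d, hd⟩ := Ideal.mem_span_singleton'.mp ((hmem y).mpr ⟨1, 0, by ring⟩)
  obtain ⟨t, u, htu⟩ := (hmem c).mp (Ideal.mem_span_singleton'.mpr ⟨1, by ring⟩)
  -- Nakayama: `(1 - u * c) * c = t * y` with `1 - u * c` a unit.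
  obtain ⟨v, hv⟩ : ∃ v, v * y = c := by
    obtain ⟨e, he⟩ := isUnit_one_sub_self_of_mem_nonunits _ ((maximalIdeal R).mul_mem_left u hcm)
    refine ⟨↑e⁻¹ * t, ?_⟩
    rw [mul_assoc, show t * y = e * c by rw [he]; linear_combination htu, ← mul_assoc,
      Units.inv_mul, one_mul]
  have hc' : (1 - v * d) * c = 0 := hc _ (by linear_combination (-v) * hd - c * hv)
  have hvd : IsUnit (v * d) := (isUnit_or_isUnit_one_sub_self _).resolve_right
    fun hu ↦ hc0 (hu.mul_right_eq_zero.mp hc')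
  have hyc : y = d * c := by
    have h0 : v * (y - d * c) = 0 := by linear_combination hv + hc'
    linear_combination (isUnit_of_mul_isUnit_left hvd).mul_right_eq_zero.mp h0
  subst hyc
  refine mem_nonZeroDivisors_iff_right.mpr fun w hw ↦ ?_
  obtain ⟨t', u', rfl⟩ := (hmem w).mp (by rw [hw]; exact zero_mem _)
  linear_combination hc (t' * d + u' * c) (by linear_combination hw)

end

theorem not_mem_associatedPrimes_of_dim_one_hom_iso (R : Type*) [CommRing R] [IsNoetherianRing R] [IsLocalRing R]
    (hdim : ringKrullDim R = 1)
    (h : ∀ b ∈ maximalIdeal R, (Ideal.span {b}).radical = maximalIdeal R →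
      ∀ s : ℕ, 1 ≤ s →
        Nonempty (((R ⧸ Ideal.span {b}) →ₗ[R] (R ⧸ Ideal.span {b ^ s})) ≃ₗ[R]
          (R ⧸ Ideal.span {b}))) :
    maximalIdeal R ∉ associatedPrimes R R := by
  intro hass
  obtain ⟨b, hb⟩ := exists_radical_span_singleton_eq_maximalIdeal hdim
  have hbm : b ∈ maximalIdeal R := hb ▸ Ideal.le_radical (Ideal.mem_span_singleton_self b)
  obtain ⟨n, hn, hstab⟩ := exists_pow_ne_zero_forall_mul_pow_mul_pow_eq_zero b
  have hcm : b ^ n ∈ maximalIdeal R := Ideal.pow_mem_of_mem _ hbm n (Nat.pos_of_ne_zero hn)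
  have hc : (Ideal.span {b ^ n}).radical = maximalIdeal R := by
    rw [← Ideal.span_singleton_pow, Ideal.radical_pow _ hn, hb]
  have hc0 : b ^ n ≠ 0 := fun h0 ↦ by
    have hle := Ring.krullDimLE_iff.mp
      (krullDimLE_zero_of_isNilpotent_of_radical_span_singleton_eq ⟨n, h0⟩ hb)
    rw [hdim] at hle
    exact absurd hle (by norm_num)
  obtain ⟨e⟩ := h (b ^ n) hcm hc 2 one_le_two
  obtain ⟨ψ, hψ⟩ := e.exists_span_singleton_eq_top_of_quotient
  obtain ⟨y, hy⟩ := Ideal.exists_colon_eq_span_singleton_sup_of_span_singleton_eq_top hψ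
  have hcreg := mem_nonZeroDivisors_of_colon_eq_span_singleton_sup hcm hc0 hstab hy
  obtain ⟨m, rfl⟩ := Nat.exists_eq_succ_of_ne_zero hn
  have hbreg : b ∈ nonZeroDivisors R := (mul_mem_nonZeroDivisors.mp (pow_succ' b m ▸ hcreg)).1
  exact (biUnion_associatedPrimes_eq_compl_nonZeroDivisors R).subset
    (Set.mem_biUnion hass hbm) hbreg
end
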